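/- arXiv:2007.12811 — 4 statements merged into one kernel-verified Lean document; each statement's English description precedes it below -/
import Mathlib

section
/- Let $f_n \in L^2(\mathbb{R}_+^n)$ and $g_m \in L^2(\mathbb{R}_+^m)$ be symmetric square-integrable functions, and let $0 \le k \le \min(n,m)$. Then $\|f_n\star_k^k g_m\|_{L^2(\mathbb{R}_+^{m+n-2k})}^2 \le 2^{2n-4k-1}\|f_n\star_{n-k}^{n-k} f_n\|_{L^2(\mathbb{R}_+^{2k})}^2 + 2^{2m-4k-1}\|g_m\star_{m-k}^{m-k} g_m\|_{L^2(\mathbb{R}_+^{2k})}^2$. -/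
open MeasureTheory

/-- Lebesgue measure on the positive orthant of `ℝ^a`. -/
noncomputable def posMeasure (a : ℕ) : Measure (Fin a → ℝ) :=
  (volume : Measure (Fin a → ℝ)).restrict {x | ∀ i, 0 < x i}

/-!
Expanding the square of `f ⋆_k^k g` and integrating over the free variables `(y, z)` first turns
`‖f ⋆_k^k g‖²` into `∫∫ F(u, x) G(u, x) du dx`, where `F(u, x) = ∫ f(u, y) f(x, y) dy` and
`G(u, x) = ∫ g(u, z) g(x, z) dz` are, up to powers of `2`, the self-contractions
`f ⋆_{n-k}^{n-k} f` and `g ⋆_{m-k}^{m-k} g`; the bound is then `F G ≤ (F² + G²) / 2` pointwise.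
Fubini applies because Cauchy–Schwarz on the slices `f(u, ·)` bounds `∫ |f(u, y) f(x, y)| dy` by
`‖f(u, ·)‖ ‖f(x, ·)‖`, so `F` is square integrable and so is its `|·|`-analogue, which controls the
fourfold integrand. As `MemLp` only gives a.e.-measurability, `f` and `g` are first replaced by
measurable representatives, which changes none of the iterated integrals.
-/

open ENNReal Function

theorem ENNReal.sq_lintegral_mul_le {α : Type*} [MeasurableSpace α] {μ : Measure α}
    {φ ψ : α → ℝ≥0∞} (hφ : AEMeasurable φ μ) (hψ : AEMeasurable ψ μ) :
    (∫⁻ a, φ a * ψ a ∂μ) ^ 2 ≤ (∫⁻ a, φ a ^ 2 ∂μ) * ∫⁻ a, ψ a ^ 2 ∂μ := by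
  have h := lintegral_mul_le_Lp_mul_Lq μ Real.HolderConjugate.two_two hφ hψ
  simp only [Pi.mul_apply, ENNReal.rpow_two] at h
  calc (∫⁻ a, φ a * ψ a ∂μ) ^ 2
      ≤ ((∫⁻ a, φ a ^ 2 ∂μ) ^ (1 / 2 : ℝ) * (∫⁻ a, ψ a ^ 2 ∂μ) ^ (1 / 2 : ℝ)) ^ 2 := by gcongr
    _ = _ := by
      rw [mul_pow, ← ENNReal.rpow_two, ← ENNReal.rpow_two, ← ENNReal.rpow_mul, ← ENNReal.rpow_mul]
      norm_num

theorem MeasureTheory.MemLp.lintegral_enorm_sq_lt_top {α : Type*} [MeasurableSpace α]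
    {μ : Measure α} {f : α → ℝ} (hf : MemLp f 2 μ) : ∫⁻ a, ‖f a‖ₑ ^ 2 ∂μ < ∞ := by
  simpa only [HasFiniteIntegral, enorm_pow] using hf.integrable_sq.hasFiniteIntegral

section Contraction

variable {A C D : Type*} [MeasurableSpace A] [MeasurableSpace C] [MeasurableSpace D]
  {μ : Measure A} {ν : Measure C} {τ : Measure D}

/-- `f ⋆_k^k g` without its factor `2^{-k}`, the contracted block being the first argument;
`contraction ν (flip f) (flip f)` is `f ⋆_{n-k}^{n-k} f` up to the factor `2^{-(n-k)}`. -/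
noncomputable def contraction (μ : Measure A) (f : A → C → ℝ) (g : A → D → ℝ) (y : C) (z : D) :
    ℝ :=
  ∫ w, f w y * g w z ∂μ

theorem Measurable.uncurry_comp {X : Type*} [MeasurableSpace X] {f : A → C → ℝ}
    (hf : Measurable (uncurry f)) {i : X → A} {j : X → C} (hi : Measurable i)
    (hj : Measurable j) : Measurable fun x => f (i x) (j x) :=
  hf.comp (hi.prodMk hj)

theorem measurable_lintegral_enorm_mul_enorm [SFinite ν] {f : A → C → ℝ}
    (hfm : Measurable (uncurry f)) :
    Measurable fun p : A × A => ∫⁻ y, ‖f p.1 y‖ₑ * ‖f p.2 y‖ₑ ∂ν :=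
  ((hfm.uncurry_comp measurable_fst.fst measurable_snd).enorm.mul
    (hfm.uncurry_comp measurable_fst.snd measurable_snd).enorm).lintegral_prod_right'

theorem lintegral_sq_lintegral_enorm_mul_lt_top [SFinite μ] [SFinite ν] {f : A → C → ℝ}
    (hfm : Measurable (uncurry f)) (hf : MemLp (uncurry f) 2 (μ.prod ν)) :
    ∫⁻ p : A × A, (∫⁻ y, ‖f p.1 y‖ₑ * ‖f p.2 y‖ₑ ∂ν) ^ 2 ∂(μ.prod μ) < ∞ := by
  set n : A → ℝ≥0∞ := fun w => ∫⁻ y, ‖f w y‖ₑ ^ 2 ∂ν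
  have hn : Measurable n := (hfm.enorm.pow_const 2).lintegral_prod_right'
  calc _ ≤ ∫⁻ p : A × A, n p.1 * n p.2 ∂(μ.prod μ) := lintegral_mono fun p =>
        ENNReal.sq_lintegral_mul_le hfm.of_uncurry_left.enorm.aemeasurable
          hfm.of_uncurry_left.enorm.aemeasurable
    _ = (∫⁻ q, ‖uncurry f q‖ₑ ^ 2 ∂(μ.prod ν)) ^ 2 := by
      rw [lintegral_prod_mul hn.aemeasurable hn.aemeasurable, sq,
        lintegral_prod _ (hfm.enorm.pow_const 2).aemeasurable]
      rfl
    _ < ∞ := ENNReal.pow_lt_top hf.lintegral_enorm_sq_lt_top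

theorem memLp_two_uncurry_contraction_flip [SFinite μ] [SFinite ν] {f : A → C → ℝ}
    (hfm : Measurable (uncurry f)) (hf : MemLp (uncurry f) 2 (μ.prod ν)) :
    MemLp (uncurry (contraction ν (flip f) (flip f))) 2 (μ.prod μ) := by
  have hmeas : StronglyMeasurable (uncurry (contraction ν (flip f) (flip f))) :=
    ((hfm.uncurry_comp measurable_fst.fst measurable_snd).mul
      (hfm.uncurry_comp measurable_fst.snd measurable_snd)).stronglyMeasurable.integral_prod_right'
  refine (memLp_two_iff_integrable_sq hmeas.aestronglyMeasurable).2
    ⟨hmeas.aestronglyMeasurable.pow 2, ?_⟩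
  refine lt_of_le_of_lt (lintegral_mono fun p => ?_)
    (lintegral_sq_lintegral_enorm_mul_lt_top hfm hf)
  rw [enorm_pow]
  gcongr
  exact (enorm_integral_le_lintegral_enorm _).trans_eq (by simp only [flip, enorm_mul])

theorem integrable_contraction_sq_integrand [SFinite μ] [SFinite ν] [SFinite τ]
    {f : A → C → ℝ} {g : A → D → ℝ}
    (hfm : Measurable (uncurry f)) (hf : MemLp (uncurry f) 2 (μ.prod ν))
    (hgm : Measurable (uncurry g)) (hg : MemLp (uncurry g) 2 (μ.prod τ)) :
    Integrable (fun q : (A × A) × (C × D) =>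
      (f q.1.1 q.2.1 * g q.1.1 q.2.2) * (f q.1.2 q.2.1 * g q.1.2 q.2.2))
      ((μ.prod μ).prod (ν.prod τ)) := by
  have hmeas : Measurable fun q : (A × A) × (C × D) =>
      (f q.1.1 q.2.1 * g q.1.1 q.2.2) * (f q.1.2 q.2.1 * g q.1.2 q.2.2) := by
    refine ((hfm.uncurry_comp ?_ ?_).mul (hgm.uncurry_comp ?_ ?_)).mul
      ((hfm.uncurry_comp ?_ ?_).mul (hgm.uncurry_comp ?_ ?_)) <;> fun_prop
  have hfactor (w w' : A) : ∫⁻ e : C × D, ‖(f w e.1 * g w e.2) * (f w' e.1 * g w' e.2)‖ₑ ∂(ν.prod τ)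
      = (∫⁻ y, ‖f w y‖ₑ * ‖f w' y‖ₑ ∂ν) * ∫⁻ z, ‖g w z‖ₑ * ‖g w' z‖ₑ ∂τ := by
    refine Eq.trans (lintegral_congr fun e => ?_) (lintegral_prod_mul
      (hfm.of_uncurry_left.enorm.mul hfm.of_uncurry_left.enorm).aemeasurable
      (hgm.of_uncurry_left.enorm.mul hgm.of_uncurry_left.enorm).aemeasurable)
    simp only [enorm_mul]
    ring
  have hPf := lintegral_sq_lintegral_enorm_mul_lt_top hfm hf
  have hPg := lintegral_sq_lintegral_enorm_mul_lt_top hgm hg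
  refine ⟨hmeas.aestronglyMeasurable, ?_⟩
  rw [HasFiniteIntegral, lintegral_prod _ hmeas.enorm.aemeasurable]
  simp only [hfactor]
  have hsq := (ENNReal.sq_lintegral_mul_le (measurable_lintegral_enorm_mul_enorm hfm).aemeasurable
    (measurable_lintegral_enorm_mul_enorm hgm).aemeasurable).trans_lt
    (ENNReal.mul_lt_top hPf hPg)
  exact (ENNReal.pow_lt_top_iff.1 hsq).resolve_right two_ne_zero

theorem sq_integral_eq_integral_prod_mul [SFinite μ] (φ : A → ℝ) :
    (∫ w, φ w ∂μ) ^ 2 = ∫ p : A × A, φ p.1 * φ p.2 ∂(μ.prod μ) := by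
  rw [sq, integral_prod_mul]

section SquareOfIntegral

variable [SFinite μ] [SFinite ν] {Φ : A → C → ℝ}
  (hΦ : Integrable (fun q : (A × A) × C => Φ q.1.1 q.2 * Φ q.1.2 q.2) ((μ.prod μ).prod ν))
include hΦ

theorem integrable_sq_integral_of_integrable_prod :
    Integrable (fun y => (∫ w, Φ w y ∂μ) ^ 2) ν :=
  hΦ.integral_prod_right.congr
    (.of_forall fun y => (sq_integral_eq_integral_prod_mul (Φ · y)).symm)

theorem integral_sq_integral_eq_integral_integral :
    ∫ y, (∫ w, Φ w y ∂μ) ^ 2 ∂ν = ∫ p : A × A, ∫ y, Φ p.1 y * Φ p.2 y ∂ν ∂(μ.prod μ) := by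
  rw [← integral_prod _ hΦ, integral_prod_symm _ hΦ]
  exact integral_congr_ae (.of_forall fun y => sq_integral_eq_integral_prod_mul (Φ · y))

end SquareOfIntegral

theorem integral_integral_contraction_sq_le_of_measurable [SFinite μ] [SFinite ν] [SFinite τ]
    {f : A → C → ℝ} {g : A → D → ℝ}
    (hfm : Measurable (uncurry f)) (hf : MemLp (uncurry f) 2 (μ.prod ν))
    (hgm : Measurable (uncurry g)) (hg : MemLp (uncurry g) 2 (μ.prod τ)) :
    ∫ y, ∫ z, contraction μ f g y z ^ 2 ∂τ ∂ν ≤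
      2⁻¹ * ∫ u, ∫ x, contraction ν (flip f) (flip f) u x ^ 2 ∂μ ∂μ +
      2⁻¹ * ∫ u, ∫ x, contraction τ (flip g) (flip g) u x ^ 2 ∂μ ∂μ := by
  set F := uncurry (contraction ν (flip f) (flip f))
  set G := uncurry (contraction τ (flip g) (flip g))
  have hF := memLp_two_uncurry_contraction_flip hfm hf
  have hG := memLp_two_uncurry_contraction_flip hgm hg
  have hH := integrable_contraction_sq_integrand hfm hf hgm hg
  have hK : ∫ e : C × D, contraction μ f g e.1 e.2 ^ 2 ∂(ν.prod τ) =
      ∫ p, F p * G p ∂(μ.prod μ) := by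
    refine (integral_sq_integral_eq_integral_integral
      (Φ := fun w (e : C × D) => f w e.1 * g w e.2) hH).trans
      (integral_congr_ae (.of_forall fun p => ?_))
    refine (integral_congr_ae (.of_forall fun e => ?_)).trans
      (integral_prod_mul (fun y => f p.1 y * f p.2 y) (fun z => g p.1 z * g p.2 z))
    ring
  calc ∫ y, ∫ z, contraction μ f g y z ^ 2 ∂τ ∂ν
      = ∫ e : C × D, contraction μ f g e.1 e.2 ^ 2 ∂(ν.prod τ) :=
        (integral_prod _ (integrable_sq_integral_of_integrable_prod
          (Φ := fun w (e : C × D) => f w e.1 * g w e.2) hH)).symm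
    _ = ∫ p, F p * G p ∂(μ.prod μ) := hK
    _ ≤ ∫ p, 2⁻¹ * F p ^ 2 + 2⁻¹ * G p ^ 2 ∂(μ.prod μ) :=
        integral_mono (hF.integrable_mul hG)
          ((hF.integrable_sq.const_mul _).add (hG.integrable_sq.const_mul _))
          fun p => by nlinarith [sq_nonneg (F p - G p)]
    _ = _ := by
      rw [integral_add (hF.integrable_sq.const_mul _) (hG.integrable_sq.const_mul _),
        integral_const_mul, integral_const_mul, integral_prod _ hF.integrable_sq,
        integral_prod _ hG.integrable_sq]
      rfl

theorem ae_ae_eq_flip_of_ae_eq_uncurry [SFinite μ] [SFinite ν] {f f' : A → C → ℝ}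
    (h : uncurry f =ᵐ[μ.prod ν] uncurry f') : ∀ᵐ y ∂ν, flip f y =ᵐ[μ] flip f' y :=
  Measure.ae_ae_eq_of_ae_eq_uncurry
    ((Measure.measurePreserving_swap).quasiMeasurePreserving.ae_eq h)

theorem ae_ae_contraction_eq {f f' : A → C → ℝ} {g g' : A → D → ℝ}
    (hf : ∀ᵐ y ∂ν, flip f y =ᵐ[μ] flip f' y) (hg : ∀ᵐ z ∂τ, flip g z =ᵐ[μ] flip g' z) :
    ∀ᵐ y ∂ν, ∀ᵐ z ∂τ, contraction μ f g y z = contraction μ f' g' y z := by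
  filter_upwards [hf] with y hy
  filter_upwards [hg] with z hz
  exact integral_congr_ae (hy.mul hz)

theorem integral_integral_sq_congr {K K' : C → D → ℝ} (h : ∀ᵐ y ∂ν, ∀ᵐ z ∂τ, K y z = K' y z) :
    ∫ y, ∫ z, K y z ^ 2 ∂τ ∂ν = ∫ y, ∫ z, K' y z ^ 2 ∂τ ∂ν :=
  integral_congr_ae
    (h.mono fun _ hy => integral_congr_ae (hy.mono fun _ hz => congrArg (· ^ 2) hz))

theorem integral_integral_contraction_sq_le [SFinite μ] [SFinite ν] [SFinite τ]
    {f : A → C → ℝ} {g : A → D → ℝ}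
    (hf : MemLp (uncurry f) 2 (μ.prod ν)) (hg : MemLp (uncurry g) 2 (μ.prod τ)) :
    ∫ y, ∫ z, contraction μ f g y z ^ 2 ∂τ ∂ν ≤
      2⁻¹ * ∫ u, ∫ x, contraction ν (flip f) (flip f) u x ^ 2 ∂μ ∂μ +
      2⁻¹ * ∫ u, ∫ x, contraction τ (flip g) (flip g) u x ^ 2 ∂μ ∂μ := by
  set f' : A → C → ℝ := curry (hf.1.mk _)
  set g' : A → D → ℝ := curry (hg.1.mk _)
  have hff' : uncurry f =ᵐ[μ.prod ν] uncurry f' := hf.1.ae_eq_mk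
  have hgg' : uncurry g =ᵐ[μ.prod τ] uncurry g' := hg.1.ae_eq_mk
  have hf_ae : ∀ᵐ u ∂μ, flip (flip f) u =ᵐ[ν] flip (flip f') u :=
    Measure.ae_ae_eq_of_ae_eq_uncurry hff'
  have hg_ae : ∀ᵐ u ∂μ, flip (flip g) u =ᵐ[τ] flip (flip g') u :=
    Measure.ae_ae_eq_of_ae_eq_uncurry hgg'
  rw [integral_integral_sq_congr (ae_ae_contraction_eq (ae_ae_eq_flip_of_ae_eq_uncurry hff')
      (ae_ae_eq_flip_of_ae_eq_uncurry hgg')),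
    integral_integral_sq_congr (ae_ae_contraction_eq hf_ae hf_ae),
    integral_integral_sq_congr (ae_ae_contraction_eq hg_ae hg_ae)]
  exact integral_integral_contraction_sq_le_of_measurable hf.1.stronglyMeasurable_mk.measurable
    (hf.ae_eq hff') hg.1.stronglyMeasurable_mk.measurable (hg.ae_eq hgg')

end Contraction

instance (a : ℕ) : SigmaFinite (posMeasure a) :=
  inferInstanceAs (SigmaFinite (volume.restrict _))

theorem two_zpow_mul_sq_two_zpow_neg (a c : ℤ) :
    (2:ℝ) ^ (2 * c - 2 * a - 1) * ((2:ℝ) ^ (-c)) ^ 2 = ((2:ℝ) ^ (-a)) ^ 2 * 2⁻¹ := by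
  rw [← zpow_natCast, ← zpow_natCast, ← zpow_mul, ← zpow_mul, ← zpow_neg_one,
    ← zpow_add₀ two_ne_zero, ← zpow_add₀ two_ne_zero]
  ring_nf

/-- Blocks: `a = k` integrated common variables, `c = n - k` remaining variables of `f`,
`d = m - k` remaining variables of `g`. -/
theorem contraction_bound_eq (a c d : ℕ)
    (f : (Fin a → ℝ) → (Fin c → ℝ) → ℝ)
    (g : (Fin a → ℝ) → (Fin d → ℝ) → ℝ)
    (hf : MemLp (fun q : (Fin a → ℝ) × (Fin c → ℝ) => f q.1 q.2) 2
      ((posMeasure a).prod (posMeasure c)))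
    (hg : MemLp (fun q : (Fin a → ℝ) × (Fin d → ℝ) => g q.1 q.2) 2
      ((posMeasure a).prod (posMeasure d))) :
    (∫ y, ∫ z, ((2:ℝ) ^ (-(a:ℤ)) * ∫ w, f w y * g w z ∂(posMeasure a)) ^ 2
        ∂(posMeasure d) ∂(posMeasure c))
    ≤ (2:ℝ) ^ (2*(c:ℤ) - 2*a - 1) *
        (∫ u, ∫ x, ((2:ℝ) ^ (-(c:ℤ)) * ∫ y, f u y * f x y ∂(posMeasure c)) ^ 2
          ∂(posMeasure a) ∂(posMeasure a))
      + (2:ℝ) ^ (2*(d:ℤ) - 2*a - 1) *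
        (∫ u, ∫ x, ((2:ℝ) ^ (-(d:ℤ)) * ∫ z, g u z * g x z ∂(posMeasure d)) ^ 2
          ∂(posMeasure a) ∂(posMeasure a)) := by
  have key := integral_integral_contraction_sq_le hf hg
  simp only [contraction, flip] at key
  simp only [mul_pow, integral_const_mul]
  rw [← mul_assoc, two_zpow_mul_sq_two_zpow_neg, ← mul_assoc, two_zpow_mul_sq_two_zpow_neg]
  exact (mul_le_mul_of_nonneg_left key (sq_nonneg _)).trans_eq (by ring)
end

section
/- Let $G$ be a finite simple graph with at least one edge and no isolated vertices, let $v_H$ and $e_H$ denote the number of vertices and edges of a subgraph $H$, and let $\beta = \max\{e_H/v_H : H \subseteq G,\ v_H \ge 1\}$. Let $(p_n)_{n\ge 1}$ be a sequence in $(0,1)$. Then $\big(n p_n^{\beta} \to \infty \text{ and } n^2(1-p_n)\to\infty\big)$ if and only if $(1-p_n)\min_{H\subseteq G,\ e_H\ge 1} n^{v_H} p_n^{e_H} \to \infty$ as $n\to\infty$. -/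
/-!
Write `Φ(n, p) = min_{H ⊆ G, e_H ≥ 1} n^{v_H} p^{e_H}`. Every such `H` has `v_H ≥ 2` and
`e_H ≤ β v_H`, so `n^{v_H} p^{e_H} ≥ (n p^β)^{v_H} ≥ (n p^β)^2` once `n p^β ≥ 1`, and
also `n^{v_H} p^{e_H} ≥ n^2 p^{e_G}`. Splitting according to `p ≤ 1/2` or `p > 1/2` gives
`(1 - p) Φ ≥ min ((n p^β)^2 / 2, 2^{-e_G} n^2 (1 - p))`. Conversely `(1 - p) Φ` is at most
`(n p^β)^{v_H}` for a densest `H`, and at most `n^2 (1 - p)` by taking a single edge.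
-/

open Filter

lemma Filter.Tendsto.of_pow_atTop {α : Type*} {l : Filter α} {f : α → ℝ} {k : ℕ}
    (hk : k ≠ 0) (hf : ∀ a, 0 ≤ f a) (h : Tendsto (fun a => f a ^ k) l atTop) :
    Tendsto f l atTop := by
  have := (tendsto_rpow_atTop (by positivity : (0 : ℝ) < (k : ℝ)⁻¹)).comp h
  simpa only [Function.comp_def, Real.pow_rpow_inv_natCast (hf _) hk] using this

section

variable {x q β : ℝ} {v e : ℕ}

lemma mul_rpow_pow_le_pow_mul_pow (hx : 0 ≤ x) (hq0 : 0 < q) (hq1 : q ≤ 1)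
    (heβ : (e : ℝ) ≤ β * v) : (x * q ^ β) ^ v ≤ x ^ v * q ^ e := by
  rw [mul_pow, ← Real.rpow_natCast (q ^ β), ← Real.rpow_mul hq0.le, ← Real.rpow_natCast q e]
  exact mul_le_mul_of_nonneg_left (Real.rpow_le_rpow_of_exponent_ge hq0 hq1 heβ) (by positivity)

lemma mul_rpow_pow_eq_pow_mul_pow (hq : 0 ≤ q) (heβ : (e : ℝ) = β * v) :
    (x * q ^ β) ^ v = x ^ v * q ^ e := by
  rw [mul_pow, ← Real.rpow_natCast (q ^ β), ← Real.rpow_mul hq, ← heβ, Real.rpow_natCast]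

lemma min_le_one_sub_mul_pow_mul_pow {E : ℕ} (hx : 1 ≤ x) (hxq : 1 ≤ x * q ^ β) (hq0 : 0 < q)
    (hq1 : q < 1) (hv : 2 ≤ v) (heE : e ≤ E) (heβ : (e : ℝ) ≤ β * v) :
    min ((x * q ^ β) ^ 2 / 2) (x ^ 2 * (1 - q) / 2 ^ E) ≤ (1 - q) * (x ^ v * q ^ e) := by
  have h1q : 0 ≤ 1 - q := by linarith
  rcases le_or_gt q (1 / 2) with hq | hq
  · calc min ((x * q ^ β) ^ 2 / 2) (x ^ 2 * (1 - q) / 2 ^ E)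
        _ ≤ (x * q ^ β) ^ 2 / 2 := min_le_left _ _
        _ ≤ (1 - q) * (x * q ^ β) ^ 2 := by nlinarith [sq_nonneg (x * q ^ β)]
        _ ≤ (1 - q) * (x * q ^ β) ^ v :=
          mul_le_mul_of_nonneg_left (pow_le_pow_right₀ hxq hv) h1q
        _ ≤ (1 - q) * (x ^ v * q ^ e) := mul_le_mul_of_nonneg_left
          (mul_rpow_pow_le_pow_mul_pow (by linarith) hq0 hq1.le heβ) h1q
  · have hqe : (1 / 2 : ℝ) ^ E ≤ q ^ e :=
      calc (1 / 2 : ℝ) ^ E ≤ (1 / 2) ^ e := pow_le_pow_of_le_one (by norm_num) (by norm_num) heE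
        _ ≤ q ^ e := by gcongr
    calc min ((x * q ^ β) ^ 2 / 2) (x ^ 2 * (1 - q) / 2 ^ E)
        _ ≤ x ^ 2 * (1 - q) / 2 ^ E := min_le_right _ _
        _ = (1 - q) * (x ^ 2 * (1 / 2) ^ E) := by rw [one_div_pow]; ring
        _ ≤ (1 - q) * (x ^ v * q ^ e) := mul_le_mul_of_nonneg_left
          (mul_le_mul (pow_le_pow_right₀ hx hv) hqe (by positivity) (by positivity)) h1q

end

namespace SimpleGraph

variable {V : Type*} {G : SimpleGraph V} {x q β : ℝ}

lemma Subgraph.two_le_ncard_verts [Finite V] {H : G.Subgraph} (h : H.edgeSet.Nonempty) :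
    2 ≤ H.verts.ncard := by
  obtain ⟨e, he⟩ := h
  induction e using Sym2.ind with
  | _ a b =>
    rw [Subgraph.mem_edgeSet] at he
    rw [← Set.ncard_pair (H.adj_sub he).ne]
    exact Set.ncard_le_ncard (Set.pair_subset (H.edge_vert he) (H.edge_vert he.symm))

lemma exists_subgraph_ncard_verts_eq_two_ncard_edgeSet_eq_one (hE : G.edgeSet.Nonempty) :
    ∃ H : G.Subgraph, H.verts.ncard = 2 ∧ H.edgeSet.ncard = 1 := by
  obtain ⟨e, he⟩ := hE
  induction e using Sym2.ind with
  | _ a b =>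
    rw [mem_edgeSet] at he
    refine ⟨G.subgraphOfAdj he, Set.ncard_pair he.ne, ?_⟩
    rw [edgeSet_subgraphOfAdj, Set.ncard_singleton]

variable (G) in
def subgraphDensities : Set ℝ :=
  {r : ℝ | ∃ H : G.Subgraph, 1 ≤ H.verts.ncard ∧
    r = (H.edgeSet.ncard : ℝ) / (H.verts.ncard : ℝ)}

lemma half_le_of_mem_upperBounds_subgraphDensities (hE : G.edgeSet.Nonempty)
    (hβ : β ∈ upperBounds G.subgraphDensities) : 1 / 2 ≤ β := by
  obtain ⟨H, hv, he⟩ := exists_subgraph_ncard_verts_eq_two_ncard_edgeSet_eq_one hE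
  exact hβ ⟨H, by omega, by rw [hv, he]; norm_num⟩

lemma ncard_edgeSet_le_mul_of_mem_upperBounds (hβ : β ∈ upperBounds G.subgraphDensities)
    {H : G.Subgraph} (hH : 1 ≤ H.verts.ncard) :
    (H.edgeSet.ncard : ℝ) ≤ β * H.verts.ncard := by
  rw [← div_le_iff₀ (by exact_mod_cast hH)]
  exact hβ ⟨H, hH, rfl⟩

lemma exists_ncard_edgeSet_eq_mul (hβ : β ∈ G.subgraphDensities) (hβ0 : 0 < β) :
    ∃ H : G.Subgraph, 1 ≤ H.verts.ncard ∧ 1 ≤ H.edgeSet.ncard ∧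
      (H.edgeSet.ncard : ℝ) = β * H.verts.ncard := by
  obtain ⟨H, hv, rfl⟩ := hβ
  have hv' : (0 : ℝ) < H.verts.ncard := by exact_mod_cast hv
  refine ⟨H, hv, ?_, by field_simp⟩
  have : (0 : ℝ) < H.edgeSet.ncard := (div_pos_iff_of_pos_right hv').1 hβ0
  exact_mod_cast this

variable (G) in
/-- `Φ_G` of Janson–Łuczak–Ruciński: for `x = n` it is, up to constants, the smallest
expected number of copies in `G(n, q)` of a nonempty subgraph of `G`. -/
noncomputable def phi (x q : ℝ) : ℝ :=
  sInf {y : ℝ | ∃ H : G.Subgraph, 1 ≤ H.edgeSet.ncard ∧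
    y = x ^ H.verts.ncard * q ^ H.edgeSet.ncard}

lemma phi_le (hx : 0 ≤ x) (hq : 0 ≤ q) {H : G.Subgraph} (hH : 1 ≤ H.edgeSet.ncard) :
    G.phi x q ≤ x ^ H.verts.ncard * q ^ H.edgeSet.ncard :=
  csInf_le ⟨0, by rintro _ ⟨H, -, rfl⟩; positivity⟩ ⟨H, hH, rfl⟩

lemma le_phi (hE : G.edgeSet.Nonempty) {c : ℝ}
    (h : ∀ H : G.Subgraph, 1 ≤ H.edgeSet.ncard →
      c ≤ x ^ H.verts.ncard * q ^ H.edgeSet.ncard) :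
    c ≤ G.phi x q := by
  obtain ⟨H₀, -, he₀⟩ := exists_subgraph_ncard_verts_eq_two_ncard_edgeSet_eq_one hE
  exact le_csInf ⟨_, H₀, he₀.ge, rfl⟩ (by rintro _ ⟨H, hH, rfl⟩; exact h H hH)

lemma min_le_one_sub_mul_phi [Finite V] (hE : G.edgeSet.Nonempty)
    (hβ : β ∈ upperBounds G.subgraphDensities) (hx : 1 ≤ x) (hxq : 1 ≤ x * q ^ β)
    (hq0 : 0 < q) (hq1 : q < 1) :
    min ((x * q ^ β) ^ 2 / 2) (x ^ 2 * (1 - q) / 2 ^ G.edgeSet.ncard) ≤ (1 - q) * G.phi x q := by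
  have h1q : 0 < 1 - q := sub_pos.2 hq1
  rw [← div_le_iff₀' h1q]
  refine le_phi hE fun H hH => ?_
  have hv := H.two_le_ncard_verts (Set.nonempty_of_ncard_ne_zero (by omega))
  rw [div_le_iff₀' h1q]
  exact min_le_one_sub_mul_pow_mul_pow hx hxq hq0 hq1 hv
    (Set.ncard_le_ncard H.edgeSet_subset) (ncard_edgeSet_le_mul_of_mem_upperBounds hβ (by omega))

lemma one_sub_mul_phi_le_pow (hx : 0 ≤ x) (hq0 : 0 < q) (hq1 : q < 1) {H : G.Subgraph}
    (hH : 1 ≤ H.edgeSet.ncard) (hβH : (H.edgeSet.ncard : ℝ) = β * H.verts.ncard) :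
    (1 - q) * G.phi x q ≤ (x * q ^ β) ^ H.verts.ncard := by
  rw [mul_rpow_pow_eq_pow_mul_pow hq0.le hβH]
  exact (mul_le_of_le_one_left (by positivity) (by linarith)).trans' <|
    mul_le_mul_of_nonneg_left (phi_le hx hq0.le hH) (by linarith)

lemma one_sub_mul_phi_le_sq_mul_one_sub (hE : G.edgeSet.Nonempty) (hx : 0 ≤ x) (hq0 : 0 < q)
    (hq1 : q < 1) : (1 - q) * G.phi x q ≤ x ^ 2 * (1 - q) := by
  obtain ⟨H, hv, he⟩ := exists_subgraph_ncard_verts_eq_two_ncard_edgeSet_eq_one hE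
  calc (1 - q) * G.phi x q
      _ ≤ (1 - q) * (x ^ 2 * q) := by
        simpa only [hv, he, pow_one] using
          mul_le_mul_of_nonneg_left (phi_le hx hq0.le he.ge) (by linarith : 0 ≤ 1 - q)
      _ ≤ x ^ 2 * (1 - q) := by
        rw [mul_comm]
        exact mul_le_mul_of_nonneg_right (mul_le_of_le_one_right (by positivity) hq1.le)
          (by linarith)

end SimpleGraph

open SimpleGraph in
theorem rucinski_condition_equiv_general {V : Type*} [Fintype V] (G : SimpleGraph V)
    (hE : G.edgeSet.Nonempty)
    (β : ℝ)
    (hβ : IsGreatest {r : ℝ | ∃ H : G.Subgraph, 1 ≤ H.verts.ncard ∧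
        r = (H.edgeSet.ncard : ℝ) / (H.verts.ncard : ℝ)} β)
    (p : ℕ → ℝ) (hp : ∀ n, p n ∈ Set.Ioo (0:ℝ) 1) :
    (Tendsto (fun n : ℕ => (n : ℝ) * (p n) ^ β) atTop atTop ∧
        Tendsto (fun n : ℕ => (n : ℝ) ^ 2 * (1 - p n)) atTop atTop) ↔
      Tendsto (fun n : ℕ => (1 - p n) *
        sInf {x : ℝ | ∃ H : G.Subgraph, 1 ≤ H.edgeSet.ncard ∧
          x = (n : ℝ) ^ H.verts.ncard * (p n) ^ H.edgeSet.ncard}) atTop atTop := by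
  change _ ↔ Tendsto (fun n : ℕ => (1 - p n) * G.phi n (p n)) atTop atTop
  have hβ0 : 0 < β := by linarith [half_le_of_mem_upperBounds_subgraphDensities hE hβ.2]
  constructor
  · rintro ⟨hdens, hedge⟩
    have hmin := tendsto_inf_atTop _
      (((tendsto_pow_atTop two_ne_zero).comp hdens).atTop_div_const two_pos)
      (hedge.atTop_div_const (r := 2 ^ G.edgeSet.ncard) (by positivity))
    refine tendsto_atTop_mono' _ ?_ hmin
    filter_upwards [hdens.eventually_ge_atTop 1, eventually_ge_atTop 1] with n hnp hn
    exact min_le_one_sub_mul_phi hE hβ.2 (by exact_mod_cast hn) hnp (hp n).1 (hp n).2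
  · intro h
    obtain ⟨H, hv, he, hβH⟩ := exists_ncard_edgeSet_eq_mul hβ.1 hβ0
    refine ⟨Tendsto.of_pow_atTop (k := H.verts.ncard) (by omega)
      (fun n => by have := (hp n).1; positivity) (tendsto_atTop_mono (fun n => ?_) h),
      tendsto_atTop_mono (fun n => ?_) h⟩
    · exact one_sub_mul_phi_le_pow n.cast_nonneg (hp n).1 (hp n).2 he hβH
    · exact one_sub_mul_phi_le_sq_mul_one_sub hE n.cast_nonneg (hp n).1 (hp n).2

/-- Equivalence of the Ruciński conditions with the divergence of
`(1 - pₙ) · min_{H ⊆ G, e_H ≥ 1} n^{v_H} pₙ^{e_H}`. -/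
theorem rucinski_condition_equiv {V : Type*} [Fintype V] (G : SimpleGraph V)
    (hE : G.edgeSet.Nonempty)
    (hiso : ∀ v : V, ∃ w, G.Adj v w)
    (β : ℝ)
    (hβ : IsGreatest {r : ℝ | ∃ H : G.Subgraph, 1 ≤ H.verts.ncard ∧
        r = (H.edgeSet.ncard : ℝ) / (H.verts.ncard : ℝ)} β)
    (p : ℕ → ℝ) (hp : ∀ n, p n ∈ Set.Ioo (0:ℝ) 1) :
    (Tendsto (fun n : ℕ => (n : ℝ) * (p n) ^ β) atTop atTop ∧
        Tendsto (fun n : ℕ => (n : ℝ) ^ 2 * (1 - p n)) atTop atTop) ↔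
      Tendsto (fun n : ℕ => (1 - p n) *
        sInf {x : ℝ | ∃ H : G.Subgraph, 1 ≤ H.edgeSet.ncard ∧
          x = (n : ℝ) ^ H.verts.ncard * (p n) ^ H.edgeSet.ncard}) atTop atTop :=
  rucinski_condition_equiv_general G hE β hβ p hp
end

section
/- Let $G$ be a finite simple graph with at least 3 vertices and at least one edge. Then $G$ satisfies the balance condition $\max_{H\subseteq G,\ v_H\ge 3} \frac{e_H - 1}{v_H - 2} = \frac{e_G-1}{v_G-2}$ if and only if for every $p\in(0,1)$ and every integer $n\ge v_G$ one has $\min_{H\subseteq G,\ e_H\ge 1} n^{v_H} p^{e_H} = \min\{n^2 p,\ n^{v_G} p^{e_G}\}$. -/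
/-!
Taking logarithms, `log (n ^ v_H * p ^ e_H) = v_H log n + e_H log p` is a linear form in the
point `(v_H, e_H)`, decreasing in the second coordinate since `p < 1`. Balance says that every
point `(v_H, e_H)` with `e_H ≥ 1` lies on or below the chord from `(2, 1)` (a single edge) to
`(v_G, e_G)`, with `2 ≤ v_H ≤ v_G`; such a linear form is minimised over that region at an
endpoint of the chord. Conversely, if some `(v_H, e_H)` lies strictly above the chord, choosing
`p` so that the level lines of the form have a slope strictly between those of the chord and of
the segment from `(2, 1)` to `(v_H, e_H)` makes `H` beat both endpoints.
-/

open Real Set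

lemma pow_mul_pow_eq_exp {n p : ℝ} (hn : 0 < n) (hp : 0 < p) (a b : ℕ) :
    n ^ a * p ^ b = exp (a * log n + b * log p) := by
  rw [exp_add, ← log_pow, ← log_pow, exp_log (by positivity), exp_log (by positivity)]

lemma sq_mul_eq_exp {n p : ℝ} (hn : 0 < n) (hp : 0 < p) :
    n ^ 2 * p = exp (2 * log n + log p) := by
  simpa using pow_mul_pow_eq_exp hn hp 2 1

lemma min_le_of_below_chord {L M a b A B : ℝ} (hM : M ≤ 0) (ha : 2 ≤ a) (haA : a ≤ A)
    (hA : 2 < A) (h : (b - 1) * (A - 2) ≤ (B - 1) * (a - 2)) :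
    min (2 * L + M) (A * L + B * M) ≤ a * L + b * M := by
  rcases le_or_gt 0 ((A - 2) * L + (B - 1) * M) with hG | hG
  · refine min_le_of_left_le ?_
    nlinarith [mul_le_mul_of_nonpos_right h hM, mul_nonneg (sub_nonneg.2 ha) hG]
  · refine min_le_of_right_le ?_
    nlinarith [mul_le_mul_of_nonpos_right h hM,
      mul_nonpos_of_nonneg_of_nonpos (sub_nonneg.2 haA) hG.le]

lemma exists_lt_min_of_above_chord {L a b A B : ℝ} (hL : 0 < L) (ha : 2 < a) (hA : 2 < A)
    (hB : 1 ≤ B) (h : (B - 1) * (a - 2) < (b - 1) * (A - 2)) :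
    ∃ M < 0, a * L + b * M < 2 * L + M ∧ a * L + b * M < A * L + B * M := by
  set D := (B - 1) * (a - 2) + (b - 1) * (A - 2)
  have hD : 0 < D := by nlinarith
  -- `M = -L / c` for the mean `c = D / (2 (A - 2) (a - 2))` of the slopes
  -- `(B - 1) / (A - 2) < (b - 1) / (a - 2)`.
  set M := -(2 * (A - 2) * (a - 2) * L / D)
  have hMD : M * D = -(2 * (A - 2) * (a - 2) * L) := by rw [neg_mul, div_mul_cancel₀ _ hD.ne']
  have hM : M < 0 := by
    have : 0 < 2 * (A - 2) * (a - 2) * L / D := by positivity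
    linarith
  have hH : (a - 2) * L + (b - 1) * M < 0 := by
    have : 0 < (a - 2) * L * ((b - 1) * (A - 2) - (B - 1) * (a - 2)) := by
      have := sub_pos.2 h; positivity
    nlinarith
  have hG : 0 < (A - 2) * L + (B - 1) * M := by
    have : 0 < (A - 2) * L * ((b - 1) * (A - 2) - (B - 1) * (a - 2)) := by
      have := sub_pos.2 h; positivity
    nlinarith
  exact ⟨M, hM, by linarith, by linarith⟩

namespace SimpleGraph

variable {V : Type*} {G : SimpleGraph V}

namespace Subgraph

lemma two_le_ncard_verts_s4 [Finite V] {H : G.Subgraph} (h : H.edgeSet.Nonempty) :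
    2 ≤ H.verts.ncard := by
  obtain ⟨e, he⟩ := h
  induction e using Sym2.ind with
  | _ a b =>
    rw [Subgraph.mem_edgeSet] at he
    rw [← ncard_pair he.ne]
    exact ncard_le_ncard (insert_subset he.fst_mem (singleton_subset_iff.2 he.snd_mem))

lemma ncard_edgeSet_le_one [Finite V] {H : G.Subgraph} (h : H.verts.ncard = 2) :
    H.edgeSet.ncard ≤ 1 := by
  obtain ⟨x, y, -, hv⟩ := ncard_eq_two.mp h
  suffices H.edgeSet ⊆ {s(x, y)} from (ncard_le_ncard this).trans (ncard_singleton _).le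
  intro e he
  induction e using Sym2.ind with
  | _ a b =>
    rw [Subgraph.mem_edgeSet] at he
    have ha := hv ▸ he.fst_mem
    have hb := hv ▸ he.snd_mem
    simp only [mem_insert_iff, mem_singleton_iff] at ha hb
    rcases ha with rfl | rfl <;> rcases hb with rfl | rfl
    all_goals first | exact absurd rfl he.ne | simp [Sym2.eq_swap]

lemma ncard_verts_le [Fintype V] (H : G.Subgraph) : H.verts.ncard ≤ Fintype.card V :=
  Nat.card_eq_fintype_card (α := V) ▸ ncard_le_card _

end Subgraph

/-- Up to a constant factor, `n ^ v_H * p ^ e_H` is the expected number of copies of `H` in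
`G(n, p)`. -/
def subgraphWeights (G : SimpleGraph V) (n p : ℝ) : Set ℝ :=
  {x | ∃ H : G.Subgraph, 1 ≤ H.edgeSet.ncard ∧ x = n ^ H.verts.ncard * p ^ H.edgeSet.ncard}

lemma bddBelow_subgraphWeights {n p : ℝ} (hn : 0 ≤ n) (hp : 0 ≤ p) :
    BddBelow (G.subgraphWeights n p) :=
  ⟨0, by rintro _ ⟨H, -, rfl⟩; positivity⟩

lemma cross_mul_le_of_balanced [Fintype V] (hV : 3 ≤ Fintype.card V)
    (hbal : ∀ H : G.Subgraph, 3 ≤ H.verts.ncard →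
      ((H.edgeSet.ncard : ℝ) - 1) / ((H.verts.ncard : ℝ) - 2) ≤
        ((G.edgeSet.ncard : ℝ) - 1) / ((Fintype.card V : ℝ) - 2))
    {H : G.Subgraph} (hH : H.edgeSet.Nonempty) :
    ((H.edgeSet.ncard : ℝ) - 1) * ((Fintype.card V : ℝ) - 2) ≤
      ((G.edgeSet.ncard : ℝ) - 1) * ((H.verts.ncard : ℝ) - 2) := by
  rcases (Subgraph.two_le_ncard_verts_s4 hH).eq_or_lt with h2 | h3
  · have h1 : H.edgeSet.ncard = 1 :=
      (Subgraph.ncard_edgeSet_le_one h2.symm).antisymm ((ncard_pos).2 hH)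
    simp [h1, ← h2]
  · have hV' : (3 : ℝ) ≤ Fintype.card V := by exact_mod_cast hV
    have h3' : (3 : ℝ) ≤ H.verts.ncard := by exact_mod_cast h3
    exact (div_le_div_iff₀ (by linarith) (by linarith)).1 (hbal H h3)

lemma sInf_subgraphWeights_of_balanced [Fintype V] (hV : 3 ≤ Fintype.card V)
    (hE : G.edgeSet.Nonempty)
    (hbal : ∀ H : G.Subgraph, 3 ≤ H.verts.ncard →
      ((H.edgeSet.ncard : ℝ) - 1) / ((H.verts.ncard : ℝ) - 2) ≤
        ((G.edgeSet.ncard : ℝ) - 1) / ((Fintype.card V : ℝ) - 2))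
    {n p : ℝ} (hn : 0 < n) (hp0 : 0 < p) (hp1 : p ≤ 1) :
    sInf (G.subgraphWeights n p) =
      min (n ^ 2 * p) (n ^ Fintype.card V * p ^ G.edgeSet.ncard) := by
  obtain ⟨a, b, hab⟩ := ne_bot_iff_exists_adj.1 (edgeSet_nonempty.1 hE)
  refine IsLeast.csInf_eq ⟨?_, ?_⟩
  · rcases min_choice (n ^ 2 * p) (n ^ Fintype.card V * p ^ G.edgeSet.ncard) with h | h <;>
      rw [h]
    · exact ⟨G.subgraphOfAdj hab, by simp, by simp [ncard_pair hab.ne]⟩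
    · exact ⟨⊤, (ncard_pos).2 hE, by simp [Nat.card_eq_fintype_card]⟩
  · rintro _ ⟨H, hH, rfl⟩
    have hH' : H.edgeSet.Nonempty := (ncard_pos).1 hH
    have hV' : (3 : ℝ) ≤ Fintype.card V := by exact_mod_cast hV
    have h2 : (2 : ℝ) ≤ H.verts.ncard := by exact_mod_cast Subgraph.two_le_ncard_verts_s4 hH'
    have hle : (H.verts.ncard : ℝ) ≤ Fintype.card V := by exact_mod_cast H.ncard_verts_le
    rw [sq_mul_eq_exp hn hp0, pow_mul_pow_eq_exp hn hp0, pow_mul_pow_eq_exp hn hp0,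
      ← exp_monotone.map_min, exp_le_exp]
    exact min_le_of_below_chord (log_nonpos hp0.le hp1) h2 hle (by linarith)
      (cross_mul_le_of_balanced hV hbal hH')

lemma exists_sInf_subgraphWeights_lt_min [Fintype V] (hV : 3 ≤ Fintype.card V)
    (hE : G.edgeSet.Nonempty) {n : ℝ} (hn : 1 < n) {H : G.Subgraph} (hH : 3 ≤ H.verts.ncard)
    (hlt : ((G.edgeSet.ncard : ℝ) - 1) / ((Fintype.card V : ℝ) - 2) <
      ((H.edgeSet.ncard : ℝ) - 1) / ((H.verts.ncard : ℝ) - 2)) :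
    ∃ p ∈ Ioo 0 1, sInf (G.subgraphWeights n p) <
      min (n ^ 2 * p) (n ^ Fintype.card V * p ^ G.edgeSet.ncard) := by
  have hV' : (3 : ℝ) ≤ Fintype.card V := by exact_mod_cast hV
  have hH' : (3 : ℝ) ≤ H.verts.ncard := by exact_mod_cast hH
  have hE' : (1 : ℝ) ≤ G.edgeSet.ncard := by exact_mod_cast (ncard_pos).2 hE
  have hcross := (div_lt_div_iff₀ (by linarith) (by linarith)).1 hlt
  have hH1 : 1 ≤ H.edgeSet.ncard := by
    have : (1 : ℝ) < H.edgeSet.ncard := by nlinarith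
    exact_mod_cast this.le
  obtain ⟨M, hM, hK, hG⟩ :=
    exists_lt_min_of_above_chord (log_pos hn) (by linarith) (by linarith) hE' hcross
  have hn0 : 0 < n := by linarith
  refine ⟨exp M, ⟨exp_pos M, exp_lt_one_iff.2 hM⟩, ?_⟩
  calc sInf (G.subgraphWeights n (exp M))
      ≤ n ^ H.verts.ncard * exp M ^ H.edgeSet.ncard :=
        csInf_le (bddBelow_subgraphWeights hn0.le (exp_pos M).le) ⟨H, hH1, rfl⟩
    _ < _ := by
      rw [sq_mul_eq_exp hn0 (exp_pos M), pow_mul_pow_eq_exp hn0 (exp_pos M),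
        pow_mul_pow_eq_exp hn0 (exp_pos M), log_exp, ← exp_monotone.map_min, exp_lt_exp]
      exact lt_min hK hG

end SimpleGraph

/-- A graph with at least 3 vertices and at least one edge satisfies the balance
condition iff the minimum of `n^{v_H} p^{e_H}` over subgraphs with at least one edge
equals `min (n² p) (n^{v_G} p^{e_G})` for all `p ∈ (0,1)` and `n ≥ v_G`. -/
theorem balance_condition_iff_min {V : Type*} [Fintype V] (G : SimpleGraph V)
    (hV : 3 ≤ Fintype.card V) (hE : G.edgeSet.Nonempty) :
    (∀ H : G.Subgraph, 3 ≤ H.verts.ncard →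
        ((H.edgeSet.ncard : ℝ) - 1) / ((H.verts.ncard : ℝ) - 2) ≤
          ((G.edgeSet.ncard : ℝ) - 1) / ((Fintype.card V : ℝ) - 2)) ↔
      (∀ p : ℝ, p ∈ Set.Ioo (0:ℝ) 1 → ∀ n : ℕ, Fintype.card V ≤ n →
        sInf {x : ℝ | ∃ H : G.Subgraph, 1 ≤ H.edgeSet.ncard ∧
            x = (n : ℝ) ^ H.verts.ncard * p ^ H.edgeSet.ncard}
          = min ((n : ℝ) ^ 2 * p) ((n : ℝ) ^ (Fintype.card V) * p ^ (G.edgeSet.ncard))) := by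
  constructor
  · intro hbal p hp n hn
    exact G.sInf_subgraphWeights_of_balanced hV hE hbal (Nat.cast_pos.2 (by omega)) hp.1 hp.2.le
  · intro hmin H hH
    by_contra! hlt
    obtain ⟨p, hp, hlt⟩ := G.exists_sInf_subgraphWeights_lt_min hV hE (n := Fintype.card V)
      (by exact_mod_cast (by omega)) hH hlt
    exact hlt.ne (hmin p hp _ le_rfl)
end

section
/- Let $G$ be a finite simple graph without isolated vertices, $e_G\ge 1$. For each pair of integers $0\le l < k \le e_G$ and for $n$ large, $\max_{K\subseteq H\subseteq G,\ e_K = k-l,\ e_H = k}\ n^{4v_G - 2v_H - v_K}\, p^{4e_G - 2e_H - e_K}(1-p)^{2e_H - e_K - 2} \le \frac{1}{1-p}\,\max_{H\subseteq G,\ e_H\ge 1} n^{4v_G - 3v_H} p^{4e_G - 3e_H}$ for all $p\in(0,1)$ and $n \ge v_G$, up to a constant factor depending only on $G$. -/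
/-!
The left-hand term for `K ≤ H` is the weighted geometric mean `A_H ^ (2/3) * A_K ^ (1/3)` of
the right-hand terms `A_H`, `A_K` of `H` and `K` (its cube is `A_H ^ 2 * A_K`), so it is at most
`max A_H A_K`, which the supremum dominates since both `H` and `K` carry an edge. The remaining
factor `(1 - p) ^ (2 e_H - e_K - 2)` has exponent `≥ -1` because `e_K ≤ e_H` and `e_H ≥ 1`. So `C = 1`.
-/

lemma le_max_of_pow_three_eq_sq_mul {R : Type*} [Semiring R] [LinearOrder R]
    [IsStrictOrderedRing R] {x a b : R} (ha : 0 ≤ a) (hb : 0 ≤ b) (h : x ^ 3 = a ^ 2 * b) :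
    x ≤ max a b := by
  refine le_of_pow_le_pow_left₀ three_ne_zero (ha.trans (le_max_left a b)) ?_
  calc x ^ 3 = a ^ 2 * b := h
    _ ≤ max a b ^ 2 * max a b := by gcongr <;> first | positivity | simp
    _ = max a b ^ 3 := (pow_succ _ 2).symm

lemma zpow_sub_two_mul_sub_pow_three {G₀ : Type*} [CommGroupWithZero G₀] {x : G₀} (hx : x ≠ 0)
    (a b c : ℤ) : (x ^ (a - 2 * b - c)) ^ 3 = (x ^ (a - 3 * b)) ^ 2 * x ^ (a - 3 * c) := by
  rw [← zpow_natCast, ← zpow_natCast, ← zpow_mul, ← zpow_mul, ← zpow_add₀ hx]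
  congr 1
  push_cast
  ring

lemma zpow_le_inv_of_neg_one_le {K : Type*} [Semifield K] [LinearOrder K]
    [IsStrictOrderedRing K] {a : K} {m : ℤ} (ha₀ : 0 < a) (ha₁ : a ≤ 1) (hm : -1 ≤ m) :
    a ^ m ≤ a⁻¹ := by
  simpa using zpow_le_zpow_right_of_le_one₀ ha₀ ha₁ hm

lemma le_csSup_setOf_exists_eq {ι α : Type*} [Finite ι] [ConditionallyCompleteLattice α]
    {P : ι → Prop} (f : ι → α) {i : ι} (hi : P i) : f i ≤ sSup {x | ∃ j, P j ∧ x = f j} :=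
  le_csSup ((Set.finite_range f).subset (by rintro _ ⟨j, -, rfl⟩; exact ⟨j, rfl⟩)).bddAbove
    ⟨i, hi, rfl⟩

theorem max_domination_general {V : Type*} [Fintype V] (G : SimpleGraph V) :
    ∃ C : ℝ, 0 < C ∧ ∀ k l : ℕ, l < k → k ≤ G.edgeSet.ncard →
      ∀ p : ℝ, p ∈ Set.Ioo (0:ℝ) 1 → ∀ n : ℕ, Fintype.card V ≤ n →
        ∀ K H : G.Subgraph, K ≤ H →
          K.edgeSet.ncard = k - l → H.edgeSet.ncard = k →
          (n : ℝ) ^ (4 * (Fintype.card V : ℤ) - 2 * H.verts.ncard - K.verts.ncard) *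
              p ^ (4 * (G.edgeSet.ncard : ℤ) - 2 * H.edgeSet.ncard - K.edgeSet.ncard) *
              (1 - p) ^ (2 * (H.edgeSet.ncard : ℤ) - K.edgeSet.ncard - 2)
            ≤ C / (1 - p) *
              sSup {x : ℝ | ∃ H' : G.Subgraph, 1 ≤ H'.edgeSet.ncard ∧
                x = (n : ℝ) ^ (4 * (Fintype.card V : ℤ) - 3 * H'.verts.ncard) *
                  p ^ (4 * (G.edgeSet.ncard : ℤ) - 3 * H'.edgeSet.ncard)} := by
  refine ⟨1, one_pos, fun k l hlk _ p ⟨hp₀, hp₁⟩ n hn K H _ hKe hHe => ?_⟩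
  set A : G.Subgraph → ℝ := fun H' ↦ (n : ℝ) ^ (4 * (Fintype.card V : ℤ) - 3 * H'.verts.ncard) *
    p ^ (4 * (G.edgeSet.ncard : ℤ) - 3 * H'.edgeSet.ncard)
  obtain ⟨e, -⟩ := Set.nonempty_of_ncard_ne_zero (s := H.edgeSet) (by omega)
  have hn₀ : (n : ℝ) ≠ 0 := by
    have : Nonempty V := ⟨e.out.1⟩
    exact_mod_cast (Fintype.card_pos.trans_le hn).ne'
  have h_cube : ((n : ℝ) ^ (4 * (Fintype.card V : ℤ) - 2 * H.verts.ncard - K.verts.ncard) *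
      p ^ (4 * (G.edgeSet.ncard : ℤ) - 2 * H.edgeSet.ncard - K.edgeSet.ncard)) ^ 3 =
      A H ^ 2 * A K := by
    rw [mul_pow, zpow_sub_two_mul_sub_pow_three hn₀, zpow_sub_two_mul_sub_pow_three hp₀.ne']
    ring
  have h_max := le_max_of_pow_three_eq_sq_mul (by positivity) (by positivity) h_cube
  have h_sup : max (A H) (A K) ≤ _ :=
    max_le (le_csSup_setOf_exists_eq A (P := fun H' ↦ 1 ≤ H'.edgeSet.ncard) (by omega))
      (le_csSup_setOf_exists_eq A (by omega))
  have h_one_sub : (1 - p) ^ (2 * (H.edgeSet.ncard : ℤ) - K.edgeSet.ncard - 2) ≤ (1 - p)⁻¹ :=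
    zpow_le_inv_of_neg_one_le (by linarith) (by linarith) (by omega)
  calc _ ≤ max (A H) (A K) * (1 - p)⁻¹ := by gcongr
    _ ≤ 1 / (1 - p) * _ := by rw [mul_comm, one_div]; gcongr

/-- Domination, up to a constant depending only on `G`, of the maxima
`max_{K ⊆ H ⊆ G, e_K = k-l, e_H = k} n^{4v_G-2v_H-v_K} p^{4e_G-2e_H-e_K} (1-p)^{2e_H-e_K-2}`
by `(1-p)⁻¹ max_{H ⊆ G, e_H ≥ 1} n^{4v_G-3v_H} p^{4e_G-3e_H}`. -/
theorem max_domination {V : Type*} [Fintype V] (G : SimpleGraph V)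
    (hiso : ∀ v : V, ∃ w, G.Adj v w) (hE : 1 ≤ G.edgeSet.ncard) :
    ∃ C : ℝ, 0 < C ∧ ∀ k l : ℕ, l < k → k ≤ G.edgeSet.ncard →
      ∀ p : ℝ, p ∈ Set.Ioo (0:ℝ) 1 → ∀ n : ℕ, Fintype.card V ≤ n →
        ∀ K H : G.Subgraph, K ≤ H →
          K.edgeSet.ncard = k - l → H.edgeSet.ncard = k →
          (n : ℝ) ^ (4 * (Fintype.card V : ℤ) - 2 * H.verts.ncard - K.verts.ncard) *
              p ^ (4 * (G.edgeSet.ncard : ℤ) - 2 * H.edgeSet.ncard - K.edgeSet.ncard) *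
              (1 - p) ^ (2 * (H.edgeSet.ncard : ℤ) - K.edgeSet.ncard - 2)
            ≤ C / (1 - p) *
              sSup {x : ℝ | ∃ H' : G.Subgraph, 1 ≤ H'.edgeSet.ncard ∧
                x = (n : ℝ) ^ (4 * (Fintype.card V : ℤ) - 3 * H'.verts.ncard) *
                  p ^ (4 * (G.edgeSet.ncard : ℤ) - 3 * H'.edgeSet.ncard)} :=
  max_domination_general G
end
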